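/- Let c ∈ ℝ with c ≠ 0, let U ⊆ ℝ² be an open neighborhood of 0, and let f = (x,y,z,p,q) : U → ℝ⁵ be a smooth map satisfying the contact condition at 0 and the K = c condition at 0 (c·(1+p(0)²+q(0)²)²·Jac(x,y)(0) = Jac(p,q)(0)). Then the derivative at 0 of π₁∘f = (x,y,z) : U → ℝ³ is injective if and only if the derivative at 0 of π₂∘f = (x·p + y·q − z, p, q) : U → ℝ³ is injective. -/

import Mathlib

noncomputable section

/-- Partial derivative in the direction `(1,0)`. -/
def pu (g : ℝ × ℝ → ℝ) (a : ℝ × ℝ) : ℝ := fderiv ℝ g a (1, 0)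

/-- Partial derivative in the direction `(0,1)`. -/
def pv (g : ℝ × ℝ → ℝ) (a : ℝ × ℝ) : ℝ := fderiv ℝ g a (0, 1)

/-- Jacobian determinant `g_u h_v - g_v h_u`. -/
def Jac (g h : ℝ × ℝ → ℝ) (a : ℝ × ℝ) : ℝ := pu g a * pv h a - pv g a * pu h a

lemma eval2 (X : ℝ × ℝ →L[ℝ] ℝ) (v : ℝ × ℝ) :
    X v = v.1 * X (1, 0) + v.2 * X (0, 1) := by
  have hv : v = v.1 • ((1 : ℝ), (0 : ℝ)) + v.2 • ((0 : ℝ), (1 : ℝ)) := by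
    ext <;> simp
  conv_lhs => rw [hv]
  rw [map_add, map_smul, map_smul, smul_eq_mul, smul_eq_mul]

lemma inj2 (X Y : ℝ × ℝ →L[ℝ] ℝ) :
    Function.Injective (fun v => (X v, Y v)) ↔
      X (1, 0) * Y (0, 1) - X (0, 1) * Y (1, 0) ≠ 0 := by
  set a := X (1, 0) with ha
  set b := X (0, 1) with hb
  set c := Y (1, 0) with hc
  set d := Y (0, 1) with hd
  constructor
  · intro h hdet
    have hv1 : ((d, -c) : ℝ × ℝ) = 0 := by
      apply h
      show (X (d, -c), Y (d, -c)) = (X 0, Y 0)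
      rw [eval2 X, eval2 Y, eval2 X, eval2 Y]
      simp only [← ha, ← hb, ← hc, ← hd]
      norm_num
      constructor <;> nlinarith [hdet]
    have hv2 : ((-b, a) : ℝ × ℝ) = 0 := by
      apply h
      show (X (-b, a), Y (-b, a)) = (X 0, Y 0)
      rw [eval2 X, eval2 Y, eval2 X, eval2 Y]
      simp only [← ha, ← hb, ← hc, ← hd]
      norm_num
      constructor <;> nlinarith [hdet]
    have had : d = 0 := congrArg Prod.fst hv1
    have hac : c = 0 := by have := congrArg Prod.snd hv1; simpa using this
    have hab : b = 0 := by have := congrArg Prod.fst hv2; simpa using this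
    have haa : a = 0 := congrArg Prod.snd hv2
    have : ((1, 0) : ℝ × ℝ) = 0 := by
      apply h
      show (X (1, 0), Y (1, 0)) = (X 0, Y 0)
      rw [eval2 X, eval2 Y]
      simp only [← ha, ← hc, haa, hac]
      norm_num
    exact one_ne_zero (congrArg Prod.fst this)
  · intro hdet u w huw
    have h1 : X u = X w := congrArg Prod.fst huw
    have h2 : Y u = Y w := congrArg Prod.snd huw
    rw [eval2 X u, eval2 X w] at h1
    rw [eval2 Y u, eval2 Y w] at h2
    simp only [← ha, ← hb, ← hc, ← hd] at h1 h2
    have e1 : (u.1 - w.1) * (a * d - b * c) = 0 := by linear_combination d * h1 - b * h2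
    have e2 : (u.2 - w.2) * (a * d - b * c) = 0 := by linear_combination a * h2 - c * h1
    have hu1 : u.1 = w.1 := by
      rcases mul_eq_zero.1 e1 with h | h
      · linarith
      · exact absurd h hdet
    have hu2 : u.2 = w.2 := by
      rcases mul_eq_zero.1 e2 with h | h
      · linarith
      · exact absurd h hdet
    exact Prod.ext hu1 hu2

/-- If the third component is a linear combination of the first two, injectivity of the
triple reduces to injectivity of the pair. -/
lemma inj_triple (X Y Z : ℝ × ℝ →L[ℝ] ℝ) (k l : ℝ) (hZ : ∀ v, Z v = k * X v + l * Y v) :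
    Function.Injective (fun v => (X v, Y v, Z v)) ↔
      Function.Injective (fun v => (X v, Y v)) := by
  constructor
  · intro h u w huw
    apply h
    have h1 : X u = X w := congrArg Prod.fst huw
    have h2 : Y u = Y w := congrArg Prod.snd huw
    have h3 : Z u = Z w := by rw [hZ, hZ, h1, h2]
    simp [h1, h2, h3]
  · intro h u w huw
    apply h
    have h1 : X u = X w := congrArg Prod.fst huw
    have h2 : Y u = Y w := congrArg (fun t => t.2.1) huw
    simp [h1, h2]

/-- If the first component is a linear combination of the last two, injectivity of the
triple reduces to injectivity of the pair. -/
lemma inj_triple' (W P Q : ℝ × ℝ →L[ℝ] ℝ) (k l : ℝ) (hW : ∀ v, W v = k * P v + l * Q v) :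
    Function.Injective (fun v => (W v, P v, Q v)) ↔
      Function.Injective (fun v => (P v, Q v)) := by
  constructor
  · intro h u w huw
    apply h
    have h1 : P u = P w := congrArg Prod.fst huw
    have h2 : Q u = Q w := congrArg Prod.snd huw
    have h3 : W u = W w := by rw [hW, hW, h1, h2]
    simp [h1, h2, h3]
  · intro h u w huw
    apply h
    have h1 : P u = P w := congrArg (fun t => t.2.1) huw
    have h2 : Q u = Q w := congrArg (fun t => t.2.2) huw
    simp [h1, h2]

/-- For a geometric solution to `K = c`, `c ≠ 0`, the projection `π₁ ∘ f` is immersive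
at 0 if and only if the dual projection `π₂ ∘ f` is immersive at 0. -/
theorem stmt18 (c : ℝ) (hc : c ≠ 0)
    (U : Set (ℝ × ℝ)) (hU : IsOpen U) (h0 : (0 : ℝ × ℝ) ∈ U)
    (x y z p q : ℝ × ℝ → ℝ)
    (hx : ContDiffOn ℝ (⊤ : ℕ∞) x U) (hy : ContDiffOn ℝ (⊤ : ℕ∞) y U)
    (hz : ContDiffOn ℝ (⊤ : ℕ∞) z U) (hp : ContDiffOn ℝ (⊤ : ℕ∞) p U)
    (hq : ContDiffOn ℝ (⊤ : ℕ∞) q U)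
    (hcontact : pu z 0 = p 0 * pu x 0 + q 0 * pu y 0 ∧
      pv z 0 = p 0 * pv x 0 + q 0 * pv y 0)
    (hK : c * (1 + (p 0) ^ 2 + (q 0) ^ 2) ^ 2 * Jac x y 0 = Jac p q 0) :
    Function.Injective (fderiv ℝ (fun a => (x a, y a, z a)) 0) ↔
    Function.Injective
      (fderiv ℝ (fun a => (x a * p a + y a * q a - z a, p a, q a)) 0) := by
  have hmem := hU.mem_nhds h0
  have hxd : DifferentiableAt ℝ x 0 := (hx.contDiffAt hmem).differentiableAt (by simp)
  have hyd : DifferentiableAt ℝ y 0 := (hy.contDiffAt hmem).differentiableAt (by simp)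
  have hzd : DifferentiableAt ℝ z 0 := (hz.contDiffAt hmem).differentiableAt (by simp)
  have hpd : DifferentiableAt ℝ p 0 := (hp.contDiffAt hmem).differentiableAt (by simp)
  have hqd : DifferentiableAt ℝ q 0 := (hq.contDiffAt hmem).differentiableAt (by simp)
  set X := fderiv ℝ x 0 with hX
  set Y := fderiv ℝ y 0 with hY
  set Z := fderiv ℝ z 0 with hZ
  set P := fderiv ℝ p 0 with hP
  set Q := fderiv ℝ q 0 with hQ
  -- contact in terms of the CLMs
  have hc1 : Z (1, 0) = p 0 * X (1, 0) + q 0 * Y (1, 0) := hcontact.1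
  have hc2 : Z (0, 1) = p 0 * X (0, 1) + q 0 * Y (0, 1) := hcontact.2
  have hZcomb : ∀ v, Z v = p 0 * X v + q 0 * Y v := by
    intro v
    rw [eval2 Z, eval2 X, eval2 Y, hc1, hc2]
    ring
  -- derivative of the first projection
  have hF : HasFDerivAt (fun a => (x a, y a, z a)) (X.prod (Y.prod Z)) 0 :=
    HasFDerivAt.prodMk hxd.hasFDerivAt (HasFDerivAt.prodMk hyd.hasFDerivAt hzd.hasFDerivAt)
  -- derivative of the first component of the second projection
  set W : ℝ × ℝ →L[ℝ] ℝ := (x 0 • P + p 0 • X) + (y 0 • Q + q 0 • Y) - Z with hW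
  have hWd : HasFDerivAt (fun a => x a * p a + y a * q a - z a) W 0 :=
    ((hxd.hasFDerivAt.mul hpd.hasFDerivAt).add
      (hyd.hasFDerivAt.mul hqd.hasFDerivAt)).sub hzd.hasFDerivAt
  have hG : HasFDerivAt (fun a => (x a * p a + y a * q a - z a, p a, q a))
      (W.prod (P.prod Q)) 0 :=
    HasFDerivAt.prodMk hWd (HasFDerivAt.prodMk hpd.hasFDerivAt hqd.hasFDerivAt)
  have hWcomb : ∀ v, W v = x 0 * P v + y 0 * Q v := by
    intro v
    have : W v = (x 0 * P v + p 0 * X v) + (y 0 * Q v + q 0 * Y v) - Z v := by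
      simp [hW, smul_eq_mul]
    rw [this, hZcomb v]
    ring
  rw [hF.fderiv, hG.fderiv]
  have e1 : ⇑(X.prod (Y.prod Z)) = fun v => (X v, Y v, Z v) := by
    ext v <;> simp
  have e2 : ⇑(W.prod (P.prod Q)) = fun v => (W v, P v, Q v) := by
    ext v <;> simp
  rw [e1, e2, inj_triple X Y Z (p 0) (q 0) hZcomb, inj_triple' W P Q (x 0) (y 0) hWcomb,
    inj2, inj2]
  -- now it's the determinant equivalence
  have hJx : Jac x y 0 = X (1, 0) * Y (0, 1) - X (0, 1) * Y (1, 0) := rfl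
  have hJp : Jac p q 0 = P (1, 0) * Q (0, 1) - P (0, 1) * Q (1, 0) := rfl
  rw [← hJx, ← hJp]
  have hs : c * (1 + (p 0) ^ 2 + (q 0) ^ 2) ^ 2 ≠ 0 :=
    mul_ne_zero hc (by positivity)
  constructor
  · intro h hp0
    apply h
    have : Jac p q 0 = 0 := hp0
    have := hK
    rw [hp0] at this
    exact (mul_eq_zero.1 this).resolve_left hs
  · intro h hx0
    apply h
    rw [← hK, hx0, mul_zero]
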